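/- In the multi-unit model, for every pair of indices i < j (so q_i > q_j) there exists a positive integer constant R, depending only on the parameters (v, p, d), with R/(d_i·p_i) ∈ ℤ and R/(d_j·p_j) ∈ ℤ, such that for every capacity B ∈ ℕ and every vector x ∈ ℕ^k, one has Σ_n v_n·x_n + (R/(d_i·p_i))·v_i − V^d_B(x + (R/(d_i·p_i))·e_i) > Σ_n v_n·x_n + (R/(d_j·p_j))·v_j − V^d_B(x + (R/(d_j·p_j))·e_j); that is, adding R/(d_i·p_i) customers of type i to x yields strictly greater objective than adding R/(d_j·p_j) customers of type j. -/

import Mathlib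

open Finset

/-- PMF of a Binomial(m, p) random variable at value `s`. -/
noncomputable def binomPMF (p : ℝ) (m s : ℕ) : ℝ :=
  (m.choose s : ℝ) * p ^ s * (1 - p) ^ (m - s)

/-- Expectation of `g` applied to a vector of independent binomial random variables,
where coordinate `j` is Binomial(x j, p j). -/
noncomputable def jointExp {k : ℕ} (p : Fin k → ℝ) (x : Fin k → ℕ)
    (g : (Fin k → ℕ) → ℝ) : ℝ :=
  ∑ a ∈ Fintype.piFinset (fun j => Finset.range (x j + 1)),
    (∏ j, binomPMF (p j) (x j) (a j)) * g a

open Classical in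
/-- Probability of the event `E` for a vector of independent binomial random
variables, coordinate `j` being Binomial(x j, p j). -/
noncomputable def jointProb {k : ℕ} (p : Fin k → ℝ) (x : Fin k → ℕ)
    (E : (Fin k → ℕ) → Prop) : ℝ :=
  jointExp p x (fun a => if E a then 1 else 0)

/-- P[S(x) ≥ B], where S(x) = Σ_j X_{j, x_j} is Poisson binomial. -/
noncomputable def showTail {k : ℕ} (p : Fin k → ℝ) (x : Fin k → ℕ) (B : ℕ) : ℝ :=
  jointProb p x (fun a => B ≤ ∑ j, a j)

/-- Expected compensation V_B(x) = E[(S(x) − B)^+]. -/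
noncomputable def VB {k : ℕ} (p : Fin k → ℝ) (B : ℕ) (x : Fin k → ℕ) : ℝ :=
  jointExp p x (fun a => max ((∑ j, a j : ℝ) - B) 0)

/-- Objective of the offline problem with past accepted counts `y`:
f(x) = Σ_j v_j (y_j + x_j) − V_B(y + x). -/
noncomputable def objFn {k : ℕ} (v p : Fin k → ℝ) (B : ℕ) (y x : Fin k → ℕ) : ℝ :=
  ∑ j, v j * ((y j : ℝ) + (x j : ℝ)) - VB p B (fun j => y j + x j)

/-- Feasibility for the offline problem with demand bounds `n`. -/
def Feasible {k : ℕ} (n x : Fin k → ℕ) : Prop := ∀ j, x j ≤ n j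

/-- `x` is locally optimal at `j`: `x j` is the largest element of the argmax,
over `z ∈ {0,…,n j}`, of `z · v_j − V_B(y + x + (z − x_j)·e_j)`. -/
def LocallyOpt {k : ℕ} (v p : Fin k → ℝ) (B : ℕ) (n y : Fin k → ℕ)
    (x : Fin k → ℕ) (j : Fin k) : Prop :=
  ∀ z ≤ n j,
    ((z : ℝ) * v j - VB p B (fun i => y i + Function.update x j z i)
        ≤ (x j : ℝ) * v j - VB p B (fun i => y i + x i)) ∧
    (x j < z →
      (z : ℝ) * v j - VB p B (fun i => y i + Function.update x j z i)
        < (x j : ℝ) * v j - VB p B (fun i => y i + x i))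

/-- Multi-unit expected compensation `V^d_B(x) = E[(S_d(x) − B)^+]`, where
`S_d(x) = Σ_j d_j · X_{j,x_j}`. -/
noncomputable def VdB {k : ℕ} (p : Fin k → ℝ) (d : Fin k → ℕ) (B : ℕ)
    (x : Fin k → ℕ) : ℝ :=
  jointExp p x (fun a => max ((∑ j, (d j : ℝ) * (a j : ℝ)) - (B : ℝ)) 0)

/-- Multi-unit offline objective with past counts `y`:
`f_d(x) = Σ_j v_j (y_j + x_j) − V^d_B(y + x)`. -/
noncomputable def objFnD {k : ℕ} (v p : Fin k → ℝ) (d : Fin k → ℕ) (B : ℕ)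
    (y x : Fin k → ℕ) : ℝ :=
  ∑ j, v j * ((y j : ℝ) + (x j : ℝ)) - VdB p d B (fun j => y j + x j)

/-- `P[S_d(x) ≥ b]` for an integer threshold `b`. -/
noncomputable def showTailD {k : ℕ} (p : Fin k → ℝ) (d : Fin k → ℕ)
    (x : Fin k → ℕ) (b : ℤ) : ℝ :=
  jointProb p x (fun a => b ≤ ∑ j, (d j : ℤ) * (a j : ℤ))

/-- Multi-unit local optimality at `i`: `x i` is the largest element of the
argmax, over `z ∈ {0,…,n i}`, of `z · v_i − V^d_B(y + x + (z − x_i)·e_i)`. -/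
def LocallyOptD {k : ℕ} (v p : Fin k → ℝ) (d : Fin k → ℕ) (B : ℕ)
    (n y : Fin k → ℕ) (x : Fin k → ℕ) (i : Fin k) : Prop :=
  ∀ z ≤ n i,
    ((z : ℝ) * v i - VdB p d B (fun m => y m + Function.update x i z m)
        ≤ (x i : ℝ) * v i - VdB p d B (fun m => y m + x m)) ∧
    (x i < z →
      (z : ℝ) * v i - VdB p d B (fun m => y m + Function.update x i z m)
        < (x i : ℝ) * v i - VdB p d B (fun m => y m + x m))

/-!
Write `V^d_B(x + r e_i)` as the average of `Φ(d_i s)` over `s ~ Bin(r, p_i)`, where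
`Φ(c) = E[(S_d(x) + c - B)^+]` is `1`-Lipschitz in `c`. If `r d_i p_i = R`, the shift `d_i s`
has mean `R`, so `V^d_B(x + r e_i)` is within the mean absolute deviation of `d_i · Bin(r, p_i)`
of `Φ(R)`; bounding that deviation by AM-GM against the variance `d_i² r p_i (1 - p_i) ≤ d_i R`
shows it is `o(R)`. Both exchanges therefore cost `Φ(R) + o(R)`, while their revenues differ by
`(q_i - q_j) R`, so any large enough common multiple `R` of `d_i p_i` and `d_j p_j` (one exists
because the `p`'s are rational) works.
-/

lemma abs_le_half_add_sq_div {c : ℝ} (hc : 0 < c) (y : ℝ) : |y| ≤ c / 2 + y ^ 2 / (2 * c) := by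
  rw [← sq_abs y, div_add_div _ _ two_ne_zero (by positivity), le_div_iff₀ (by positivity)]
  nlinarith [sq_nonneg (|y| - c)]

section Binomial

variable {p : ℝ}

lemma binomPMF_nonneg (h0 : 0 ≤ p) (h1 : p ≤ 1) (m s : ℕ) : 0 ≤ binomPMF p m s := by
  have : 0 ≤ 1 - p := sub_nonneg.2 h1
  unfold binomPMF
  positivity

lemma binomPMF_eq_zero_of_lt {m s : ℕ} (h : m < s) : binomPMF p m s = 0 := by
  simp [binomPMF, Nat.choose_eq_zero_of_lt h]

variable (p)

lemma binomPMF_eq_eval_bernsteinPolynomial (m s : ℕ) :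
    binomPMF p m s = (bernsteinPolynomial ℝ m s).eval p := by
  simp [binomPMF, bernsteinPolynomial]

lemma sum_binomPMF (m : ℕ) : ∑ s ∈ range (m + 1), binomPMF p m s = 1 := by
  simp_rw [binomPMF_eq_eval_bernsteinPolynomial, ← Polynomial.eval_finsetSum,
    bernsteinPolynomial.sum, Polynomial.eval_one]

lemma sum_binomPMF_mul_sq_sub (m : ℕ) :
    ∑ s ∈ range (m + 1), binomPMF p m s * ((s : ℝ) - m * p) ^ 2 = m * p * (1 - p) := by
  have h := congrArg (Polynomial.eval p) (bernsteinPolynomial.variance ℝ m)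
  simp only [Polynomial.eval_finsetSum, Polynomial.eval_mul, Polynomial.eval_pow,
    Polynomial.eval_sub, Polynomial.eval_X, Polynomial.eval_natCast,
    Polynomial.eval_one, nsmul_eq_mul, ← binomPMF_eq_eval_bernsteinPolynomial] at h
  rw [← h]
  refine sum_congr rfl fun s _ => ?_
  ring

lemma binomPMF_add (m n s : ℕ) :
    binomPMF p (m + n) s = ∑ k ∈ range (s + 1), binomPMF p m k * binomPMF p n (s - k) := by
  rw [binomPMF, Nat.add_choose_eq, Nat.sum_antidiagonal_eq_sum_range_succ
    (fun a b => m.choose a * n.choose b), Nat.cast_sum, sum_mul, sum_mul]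
  refine sum_congr rfl fun k hk => ?_
  have hks : k ≤ s := Nat.lt_succ_iff.1 (mem_range.1 hk)
  rcases lt_or_ge m k with hm | hm
  · simp [binomPMF, Nat.choose_eq_zero_of_lt hm]
  rcases lt_or_ge n (s - k) with hn | hn
  · simp [binomPMF, Nat.choose_eq_zero_of_lt hn]
  have hs : p ^ s = p ^ k * p ^ (s - k) := by rw [← pow_add, Nat.add_sub_cancel' hks]
  have hq : (1 - p) ^ (m + n - s) = (1 - p) ^ (m - k) * (1 - p) ^ (n - (s - k)) := by
    rw [← pow_add]; congr 1; omega
  rw [binomPMF, binomPMF, hs, hq]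
  push_cast
  ring

lemma sum_binomPMF_add_mul (m n : ℕ) (f : ℕ → ℝ) :
    ∑ s ∈ range (m + n + 1), binomPMF p (m + n) s * f s
      = ∑ a ∈ range (m + 1), ∑ b ∈ range (n + 1), binomPMF p m a * binomPMF p n b * f (a + b) := by
  have diag : ∀ s ∈ range (m + n + 1), binomPMF p (m + n) s * f s
      = ∑ a ∈ range (s + 1), binomPMF p m a * binomPMF p n (s - a) * f (a + (s - a)) := by
    intro s _
    rw [binomPMF_add, sum_mul]
    refine sum_congr rfl fun a ha => ?_
    rw [Nat.add_sub_cancel' (Nat.lt_succ_iff.1 (mem_range.1 ha))]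
  rw [sum_congr rfl diag,
    sum_range_diag_flip _ (fun a b => binomPMF p m a * binomPMF p n b * f (a + b))]
  symm
  refine (sum_congr rfl fun a ha => ?_).trans (sum_subset (range_subset_range.2 (by omega)) ?_)
  · refine sum_subset (range_subset_range.2 ?_) fun b _ hb => ?_
    · have := mem_range.1 ha; omega
    · simp [binomPMF_eq_zero_of_lt (show n < b by simpa using hb)]
  · intro a _ ha
    simp [binomPMF_eq_zero_of_lt (show m < a by simpa using ha)]

variable {p}

lemma sum_binomPMF_mul_abs_sub_le (h0 : 0 ≤ p) (h1 : p ≤ 1) (δ : ℝ) (r : ℕ) {c : ℝ}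
    (hc : 0 < c) :
    ∑ s ∈ range (r + 1), binomPMF p r s * |δ * s - δ * (r * p)|
      ≤ c / 2 + δ ^ 2 * (r * p * (1 - p)) / (2 * c) := by
  calc ∑ s ∈ range (r + 1), binomPMF p r s * |δ * s - δ * (r * p)|
      ≤ ∑ s ∈ range (r + 1), binomPMF p r s * (c / 2 + (δ * s - δ * (r * p)) ^ 2 / (2 * c)) :=
        sum_le_sum fun s _ => mul_le_mul_of_nonneg_left (abs_le_half_add_sq_div hc _)
          (binomPMF_nonneg h0 h1 r s)
    _ = c / 2 * ∑ s ∈ range (r + 1), binomPMF p r s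
          + δ ^ 2 / (2 * c) * ∑ s ∈ range (r + 1), binomPMF p r s * ((s : ℝ) - r * p) ^ 2 := by
        rw [mul_sum, mul_sum, ← sum_add_distrib]
        exact sum_congr rfl fun s _ => by ring
    _ = c / 2 + δ ^ 2 * (r * p * (1 - p)) / (2 * c) := by
        rw [sum_binomPMF, sum_binomPMF_mul_sq_sub]
        ring

end Binomial

section JointExp

variable {k : ℕ} (p : Fin k → ℝ)

lemma jointExp_mono {x : Fin k → ℕ} (hp : ∀ m, 0 ≤ p m ∧ p m ≤ 1) {g h : (Fin k → ℕ) → ℝ}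
    (hgh : ∀ a, g a ≤ h a) : jointExp p x g ≤ jointExp p x h :=
  sum_le_sum fun a _ => mul_le_mul_of_nonneg_left (hgh a)
    (prod_nonneg fun m _ => binomPMF_nonneg (hp m).1 (hp m).2 _ _)

lemma jointExp_const (x : Fin k → ℕ) (c : ℝ) : jointExp p x (fun _ => c) = c := by
  rw [jointExp, ← sum_mul, ← prod_univ_sum, prod_eq_one fun m _ => sum_binomPMF _ _, one_mul]

lemma jointExp_add_const (x : Fin k → ℕ) (g : (Fin k → ℕ) → ℝ) (c : ℝ) :
    jointExp p x (fun a => g a + c) = jointExp p x g + c := by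
  simp only [jointExp, mul_add, sum_add_distrib]
  congr 1
  exact jointExp_const p x c

lemma prod_binomPMF_update (y c : Fin k → ℕ) (i : Fin k) (n u : ℕ) :
    ∏ m, binomPMF (p m) (Function.update y i n m) (Function.update c i u m)
      = binomPMF (p i) n u * ∏ m ∈ univ \ {i}, binomPMF (p m) (y m) (c m) := by
  simp_rw [Function.apply_update₂ (fun m => binomPMF (p m)), prod_update_of_mem (mem_univ i)]

lemma jointExp_eq_sum_update (y : Fin k → ℕ) (i : Fin k) (g : (Fin k → ℕ) → ℝ) :
    jointExp p y g = ∑ u ∈ range (y i + 1), binomPMF (p i) (y i) u *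
      jointExp p (Function.update y i 0) (fun a => g (Function.update a i u)) := by
  simp only [jointExp, mul_sum]
  rw [← sum_product']
  symm
  refine sum_nbij' (fun z => Function.update z.2 i z.1) (fun b => (b i, Function.update b i 0))
    ?_ ?_ ?_ ?_ ?_
  · rintro ⟨u, c⟩ hz
    simp only [mem_product, Fintype.mem_piFinset, mem_range] at hz ⊢
    obtain ⟨hu, hc⟩ := hz
    intro m
    rcases eq_or_ne m i with rfl | hm
    · simpa using hu
    · simpa [Function.update_of_ne hm] using hc m
  · intro b hb
    simp only [mem_product, Fintype.mem_piFinset, mem_range] at hb ⊢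
    refine ⟨hb i, fun m => ?_⟩
    rcases eq_or_ne m i with rfl | hm
    · simp
    · simpa [Function.update_of_ne hm] using hb m
  · rintro ⟨u, c⟩ hz
    have hci : c i = 0 := by simpa using (Fintype.mem_piFinset.1 (mem_product.1 hz).2) i
    simp [← hci]
  · intro b _
    simp
  · rintro ⟨u, c⟩ hz
    have hci : c i = 0 := by simpa using (Fintype.mem_piFinset.1 (mem_product.1 hz).2) i
    conv_rhs => rw [← Function.update_eq_self i y]
    conv_lhs => rw [← Function.update_eq_self i c, hci]
    simp only [prod_binomPMF_update]
    rw [Function.update_idem, show binomPMF (p i) 0 0 = 1 by simp [binomPMF]]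
    ring

lemma jointExp_add_single (x : Fin k → ℕ) (i : Fin k) (r : ℕ) (g : (Fin k → ℕ) → ℝ) :
    jointExp p (x + Pi.single i r) g
      = ∑ s ∈ range (r + 1),
          binomPMF (p i) r s * jointExp p x (fun a => g (a + Pi.single i s)) := by
  have hxi : (x + Pi.single i r : Fin k → ℕ) i = x i + r := by simp
  have hupd : Function.update (x + Pi.single i r) i 0 = Function.update x i 0 := by
    ext m
    rcases eq_or_ne m i with rfl | hm <;> simp [*]
  have hshift (a : Fin k → ℕ) (u s : ℕ) :
      Function.update a i u + Pi.single i s = Function.update a i (u + s) := by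
    ext m
    rcases eq_or_ne m i with rfl | hm <;> simp [*]
  rw [jointExp_eq_sum_update p _ i, hxi, hupd, sum_binomPMF_add_mul]
  simp_rw [jointExp_eq_sum_update p x i, hshift, mul_sum]
  rw [sum_comm]
  exact sum_congr rfl fun a _ => sum_congr rfl fun s _ => by ring

end JointExp

lemma abs_sum_mul_sub_le_of_lipschitzWith {ι : Type*} {s : Finset ι} {w a : ι → ℝ}
    {f : ℝ → ℝ} (hf : LipschitzWith 1 f) (hw : ∀ i ∈ s, 0 ≤ w i) (hw1 : ∑ i ∈ s, w i = 1)
    (b : ℝ) : |∑ i ∈ s, w i * f (a i) - f b| ≤ ∑ i ∈ s, w i * |a i - b| := by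
  calc |∑ i ∈ s, w i * f (a i) - f b| = |∑ i ∈ s, w i * (f (a i) - f b)| := by
        simp_rw [mul_sub, sum_sub_distrib, ← sum_mul, hw1, one_mul]
    _ ≤ ∑ i ∈ s, |w i * (f (a i) - f b)| := abs_sum_le_sum_abs _ _
    _ ≤ ∑ i ∈ s, w i * |a i - b| := sum_le_sum fun i hi => by
        rw [abs_mul, abs_of_nonneg (hw i hi)]
        refine mul_le_mul_of_nonneg_left ?_ (hw i hi)
        simpa [Real.dist_eq] using hf.dist_le_mul (a i) b

section Compensation

variable {k : ℕ} (p : Fin k → ℝ) (d : Fin k → ℕ) (B : ℕ)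

noncomputable def shiftedVdB (x : Fin k → ℕ) (c : ℝ) : ℝ :=
  jointExp p x (fun a => max ((∑ m, (d m : ℝ) * (a m : ℝ)) + c - B) 0)

lemma VdB_add_single (x : Fin k → ℕ) (i : Fin k) (r : ℕ) :
    VdB p d B (x + Pi.single i r)
      = ∑ s ∈ range (r + 1), binomPMF (p i) r s * shiftedVdB p d B x (d i * s) := by
  rw [VdB, jointExp_add_single]
  simp [shiftedVdB, Pi.single_apply, mul_add, sum_add_distrib]

variable {p}

lemma lipschitzWith_shiftedVdB (hp : ∀ m, 0 ≤ p m ∧ p m ≤ 1) (x : Fin k → ℕ) :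
    LipschitzWith 1 (shiftedVdB p d B x) :=
  LipschitzWith.of_le_add fun c c' => by
    rw [Real.dist_eq, shiftedVdB, shiftedVdB, ← jointExp_add_const]
    refine jointExp_mono p hp fun a => max_le ?_ ?_
    · linarith [le_abs_self (c - c'), le_max_left ((∑ m, (d m : ℝ) * (a m : ℝ)) + c' - B) 0]
    · linarith [abs_nonneg (c - c'), le_max_right ((∑ m, (d m : ℝ) * (a m : ℝ)) + c' - B) 0]

lemma abs_VdB_add_single_sub_le (hp : ∀ m, 0 ≤ p m ∧ p m ≤ 1) (x : Fin k → ℕ) (i : Fin k)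
    {r : ℕ} {R c : ℝ} (hR : r * (d i * p i) = R) (hc : 0 < c) :
    |VdB p d B (x + Pi.single i r) - shiftedVdB p d B x R| ≤ c / 2 + d i * R / (2 * c) := by
  have hR' : R = d i * (r * p i) := by rw [← hR]; ring
  rw [VdB_add_single]
  calc _ ≤ ∑ s ∈ range (r + 1), binomPMF (p i) r s * |d i * s - R| :=
        abs_sum_mul_sub_le_of_lipschitzWith (lipschitzWith_shiftedVdB d B hp x)
          (fun s _ => binomPMF_nonneg (hp i).1 (hp i).2 r s) (sum_binomPMF _ r) R
    _ ≤ c / 2 + d i ^ 2 * (r * p i * (1 - p i)) / (2 * c) := by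
        rw [hR']
        exact sum_binomPMF_mul_abs_sub_le (hp i).1 (hp i).2 _ r hc
    _ ≤ c / 2 + d i * R / (2 * c) := by
        have hvar : (d i : ℝ) ^ 2 * (r * p i * (1 - p i)) ≤ d i * R := by
          have := (hp i).1
          have : 0 ≤ (d i : ℝ) * (d i * (r * p i)) * p i := by positivity
          rw [hR']
          linarith
        gcongr

lemma VdB_add_single_sub_VdB_add_single_lt (hp : ∀ m, 0 ≤ p m ∧ p m ≤ 1) (x : Fin k → ℕ)
    {i j : Fin k} {ri rj : ℕ} {R ε : ℝ} (hri : ri * (d i * p i) = R) (hrj : rj * (d j * p j) = R)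
    (hε : 0 < ε) (hR : 2 * (d i + d j) / ε ^ 2 < R) :
    VdB p d B (x + Pi.single i ri) - VdB p d B (x + Pi.single j rj) < ε * R := by
  have hR0 : 0 < R := lt_of_le_of_lt (by positivity) hR
  -- With `c = εR/2`, each exchange is within `εR/4 + d/ε` of `Φ(R)`.
  have hc : 0 < ε * R / 2 := by positivity
  have hdev m : (d m : ℝ) * R / (2 * (ε * R / 2)) = d m / ε := by
    field_simp
  have hVi := abs_VdB_add_single_sub_le d B hp x i hri hc
  have hVj := abs_VdB_add_single_sub_le d B hp x j hrj hc
  rw [hdev] at hVi hVj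
  have hsmall : (d i + d j) / ε < ε * R / 2 := by
    rw [div_lt_iff₀ hε]
    rw [div_lt_iff₀ (by positivity)] at hR
    linarith
  linarith [abs_le.1 hVi, abs_le.1 hVj, add_div (d i : ℝ) (d j) ε]

end Compensation

lemma Rat.natAbs_num_eq_mul_den {α : ℚ} (hα : 0 < α) : (α.num.natAbs : ℚ) = α * α.den := by
  rw [Rat.mul_den_eq_num, Nat.cast_natAbs, abs_of_pos (Rat.num_pos.2 hα)]

lemma exists_nat_mul_eq_of_pos {α β : ℚ} (hα : 0 < α) (hβ : 0 < β) (T : ℝ) :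
    ∃ R a b : ℕ, T < R ∧ (a : ℚ) * α = R ∧ (b : ℚ) * β = R := by
  obtain ⟨t, ht⟩ := exists_nat_gt T
  have hA := Rat.natAbs_num_eq_mul_den hα
  have hB := Rat.natAbs_num_eq_mul_den hβ
  have hA0 : 0 < α.num.natAbs := Int.natAbs_pos.2 (Rat.num_pos.2 hα).ne'
  have hB0 : 0 < β.num.natAbs := Int.natAbs_pos.2 (Rat.num_pos.2 hβ).ne'
  refine ⟨t * α.num.natAbs * β.num.natAbs, t * α.den * β.num.natAbs,
    t * β.den * α.num.natAbs, ht.trans_le ?_, ?_, ?_⟩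
  · rw [mul_assoc]
    exact_mod_cast Nat.le_mul_of_pos_right t (Nat.mul_pos hA0 hB0)
  · push_cast
    rw [hA]; ring
  · push_cast
    rw [hB]; ring

theorem exchange_argument_multi_general {k : ℕ} (v p : Fin k → ℝ) (d : Fin k → ℕ)
    (hp : ∀ j, 0 < p j ∧ p j < 1)
    (hrat : ∀ j, ∃ q : ℚ, p j = (q : ℝ))
    (hd : ∀ j, 0 < d j)
    (hord : ∀ i j : Fin k, i < j →
      v j / ((d j : ℝ) * p j) < v i / ((d i : ℝ) * p i))
    (i j : Fin k) (hij : i < j) :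
    ∃ R ri rj : ℕ, 0 < R ∧
      (ri : ℝ) * ((d i : ℝ) * p i) = (R : ℝ) ∧
      (rj : ℝ) * ((d j : ℝ) * p j) = (R : ℝ) ∧
      ∀ (B : ℕ) (x : Fin k → ℕ),
        (∑ m, v m * (x m : ℝ)) + (rj : ℝ) * v j
            - VdB p d B (fun m => x m + if m = j then rj else 0)
          < (∑ m, v m * (x m : ℝ)) + (ri : ℝ) * v i
            - VdB p d B (fun m => x m + if m = i then ri else 0) := by
  have hp' m : 0 ≤ p m ∧ p m ≤ 1 := ⟨(hp m).1.le, (hp m).2.le⟩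
  have hdp m : 0 < (d m : ℝ) * p m := mul_pos (Nat.cast_pos.2 (hd m)) (hp m).1
  set ε := v i / (d i * p i) - v j / (d j * p j) with hε_def
  have hε : 0 < ε := sub_pos.2 (hord i j hij)
  obtain ⟨qi, hqi⟩ := hrat i
  obtain ⟨qj, hqj⟩ := hrat j
  obtain ⟨R, ri, rj, hR, hri, hrj⟩ := exists_nat_mul_eq_of_pos (α := d i * qi) (β := d j * qj)
    (by exact_mod_cast hqi ▸ hdp i) (by exact_mod_cast hqj ▸ hdp j) (2 * (d i + d j) / ε ^ 2)
  replace hri : (ri : ℝ) * (d i * p i) = R := by rw [hqi]; exact_mod_cast hri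
  replace hrj : (rj : ℝ) * (d j * p j) = R := by rw [hqj]; exact_mod_cast hrj
  have hR0 : 0 < R := Nat.cast_pos.1 ((by positivity : (0 : ℝ) ≤ _).trans_lt hR)
  refine ⟨R, ri, rj, hR0, hri, hrj, fun B x => ?_⟩
  have hrevenue : ri * v i - rj * v j = ε * R := by
    rw [hε_def]
    field_simp [(hp i).1.ne', (hp j).1.ne', (hd i).ne', (hd j).ne']
    linear_combination (v i * (d j * p j)) * hri - (v j * (d i * p i)) * hrj
  have hsingle (m : Fin k) (r : ℕ) :
      (fun l => x l + if l = m then r else 0) = x + Pi.single m r := by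
    ext l
    simp [Pi.single_apply]
  rw [hsingle, hsingle]
  linarith [VdB_add_single_sub_VdB_add_single_lt d B hp' x hri hrj hε hR]

/-- **Lemma 4 (Ext): exchange argument in the multi-unit model.**  For `i < j`
there is a positive integer `R` with `R/(d_i·p_i)` and `R/(d_j·p_j)` integers
(`ri`, `rj`) such that for every `B` and `x ∈ ℕ^k`, adding `ri` type-`i`
customers beats adding `rj` type-`j` customers. -/
theorem exchange_argument_multi {k : ℕ} (v p : Fin k → ℝ) (d : Fin k → ℕ)
    (hk : 1 ≤ k)
    (hp : ∀ j, 0 < p j ∧ p j < 1)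
    (hrat : ∀ j, ∃ q : ℚ, p j = (q : ℝ))
    (hd : ∀ j, 0 < d j)
    (hv : ∀ j, 0 < v j)
    (hq1 : ∀ j, v j < (d j : ℝ) * p j)
    (hord : ∀ i j : Fin k, i < j →
      v j / ((d j : ℝ) * p j) < v i / ((d i : ℝ) * p i))
    (i j : Fin k) (hij : i < j) :
    ∃ R ri rj : ℕ, 0 < R ∧
      (ri : ℝ) * ((d i : ℝ) * p i) = (R : ℝ) ∧
      (rj : ℝ) * ((d j : ℝ) * p j) = (R : ℝ) ∧
      ∀ (B : ℕ) (x : Fin k → ℕ),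
        (∑ m, v m * (x m : ℝ)) + (rj : ℝ) * v j
            - VdB p d B (fun m => x m + if m = j then rj else 0)
          < (∑ m, v m * (x m : ℝ)) + (ri : ℝ) * v i
            - VdB p d B (fun m => x m + if m = i then ri else 0) :=
  exchange_argument_multi_general v p d hp hrat hd hord i j hij
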